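/- arXiv:2509.17994 — 8 statements merged into one kernel-verified Lean document; each statement's English description precedes it below -/
import Mathlib

section
/- Let X be a nonempty finite type, let D_0, D_1 be distributions on X, let 𝓕 be a family of functions X → [0,1], let ε ∈ (0,1) and γ ∈ (0, 1/10). Set D_X := (1/2)(D_0 + D_1) and let g be the associated posterior function. Suppose h : X → [0,1] is (𝓕, ε)-regular and γ-calibrated for g under D_X. Set p := E_{D_X}[h]. Then 0 < p < 1, and defining distributions D̃_1(z) := h(z)·D_X(z)/p and D̃_0(z) := (1−h(z))·D_X(z)/(1−p), for each b ∈ {0,1} and every f ∈ 𝓕 one has |E_{D_b}[f] − E_{D̃_b}[f]| ≤ 2ε + 5γ. -/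
/-- Expectation of `f` under the (finitely supported) distribution `D`. -/
noncomputable def expect {X : Type*} [Fintype X] (D f : X → ℝ) : ℝ := ∑ x, D x * f x

/-- `D` is a probability distribution on the finite type `X`. -/
def IsDist {X : Type*} [Fintype X] (D : X → ℝ) : Prop := (∀ x, 0 ≤ D x) ∧ ∑ x, D x = 1

/-!
Writing `D_X` for the average of `D_0` and `D_1`, the posterior satisfies `D_1 = 2 g D_X` and
`D_0 = 2 (1 - g) D_X`, so `E_{D_1}[f] = 2 E_{D_X}[f g]`, while `E_{D̃_1}[f] = E_{D_X}[f h] / p`.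
Regularity makes `E_{D_X}[f g]` and `E_{D_X}[f h]` `ε`-close, and calibration against the constant
weight `1` gives `|p - 1/2| ≤ γ`, since `E_{D_X}[g] = 1/2`. As `0 ≤ E_{D_X}[f h] ≤ p`, replacing
the factor `1/p` by `2` costs at most `|2p - 1| ≤ 2γ`. The class `0` is the same argument applied
to `1 - g` and `1 - h`.
-/

section Expect

variable {X : Type*} [Fintype X]

theorem expect_sub (D f f' : X → ℝ) :
    expect D (fun x => f x - f' x) = expect D f - expect D f' := by
  simp only [expect, mul_sub, Finset.sum_sub_distrib]

theorem expect_nonneg {D f : X → ℝ} (hD : ∀ x, 0 ≤ D x) (hf : ∀ x, 0 ≤ f x) :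
    0 ≤ expect D f :=
  Finset.sum_nonneg fun x _ => mul_nonneg (hD x) (hf x)

theorem expect_mono {D f f' : X → ℝ} (hD : ∀ x, 0 ≤ D x) (hff' : ∀ x, f x ≤ f' x) :
    expect D f ≤ expect D f' :=
  Finset.sum_le_sum fun x _ => mul_le_mul_of_nonneg_left (hff' x) (hD x)

theorem IsDist.expect_one {D : X → ℝ} (hD : IsDist D) : expect D (fun _ => 1) = 1 := by
  simp only [expect, mul_one, hD.2]

theorem IsDist.expect_one_sub {D : X → ℝ} (hD : IsDist D) (f : X → ℝ) :
    expect D (fun x => 1 - f x) = 1 - expect D f := by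
  rw [expect_sub, hD.expect_one]

theorem IsDist.avg {D0 D1 : X → ℝ} (hD0 : IsDist D0) (hD1 : IsDist D1) :
    IsDist (fun x => (D0 x + D1 x) / 2) := by
  refine ⟨fun x => by linarith [hD0.1 x, hD1.1 x], ?_⟩
  rw [← Finset.sum_div, Finset.sum_add_distrib, hD0.2, hD1.2]
  norm_num

theorem expect_weighted_div (D c f : X → ℝ) (p : ℝ) :
    expect (fun z => c z * D z / p) f = expect D (fun z => f z * c z) / p := by
  simp only [expect, Finset.sum_div]
  exact Finset.sum_congr rfl fun x _ => by ring

end Expect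

theorem abs_two_mul_sub_div_le {A B p : ℝ} (hp : 0 < p) (hB : 0 ≤ B) (hBp : B ≤ p) :
    |2 * A - B / p| ≤ 2 * |A - B| + |2 * p - 1| := by
  have hBp' : B / p ≤ 1 := (div_le_one hp).2 hBp
  calc |2 * A - B / p| = |2 * (A - B) + B / p * (2 * p - 1)| := by
        congr 1; field_simp; ring
    _ ≤ |2 * (A - B)| + |B / p * (2 * p - 1)| := abs_add_le _ _
    _ = 2 * |A - B| + B / p * |2 * p - 1| := by
        rw [abs_mul, abs_mul, abs_two, abs_of_nonneg (div_nonneg hB hp.le)]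
    _ ≤ 2 * |A - B| + |2 * p - 1| := by
        gcongr
        exact mul_le_of_le_one_left (abs_nonneg _) hBp'

theorem mul_posterior_eq {a b : ℝ} (ha : 0 ≤ a) (hb : 0 ≤ b) :
    (a + b) * (if 0 < a + b then b / (a + b) else 0) = b := by
  split_ifs with hab
  · field_simp
  · linarith

theorem abs_two_mul_expect_sub_one_le {X : Type*} [Fintype X] {D DX u v : X → ℝ} {γ : ℝ}
    (hD : IsDist D) (hDu : ∀ x, D x = 2 * (DX x * u x))
    (hclose : |expect DX (fun x => u x - v x)| ≤ γ) :
    |2 * expect DX v - 1| ≤ 2 * γ := by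
  have hu : 2 * expect DX u = 1 := by
    rw [← hD.expect_one]
    simp only [expect, hDu, mul_one, Finset.mul_sum]
  rw [expect_sub] at hclose
  rw [show 2 * expect DX v - 1 = -2 * (expect DX u - expect DX v) by linarith, abs_mul]
  norm_num
  linarith

theorem abs_expect_sub_expect_reweight_le {X : Type*} [Fintype X] {D DX u v f : X → ℝ}
    (hD : ∀ x, D x = 2 * (DX x * u x)) (hDX : ∀ x, 0 ≤ DX x)
    (hv : ∀ x, v x ∈ Set.Icc (0:ℝ) 1) (hf : ∀ x, f x ∈ Set.Icc (0:ℝ) 1)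
    (hpos : 0 < expect DX v) :
    |expect D f - expect (fun z => v z * DX z / expect DX v) f| ≤
      2 * |expect DX (fun x => f x * (u x - v x))| + |2 * expect DX v - 1| := by
  have hDf : expect D f = 2 * expect DX (fun x => f x * u x) := by
    simp only [expect, hD, Finset.mul_sum]
    exact Finset.sum_congr rfl fun x _ => by ring
  have hdiff : expect DX (fun x => f x * (u x - v x)) =
      expect DX (fun x => f x * u x) - expect DX (fun x => f x * v x) := by
    simp only [mul_sub, expect_sub]
  rw [hDf, expect_weighted_div, hdiff]
  exact abs_two_mul_sub_div_le hpos
    (expect_nonneg hDX fun x => mul_nonneg (hf x).1 (hv x).1)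
    (expect_mono hDX fun x => mul_le_of_le_one_left (hv x).1 (hf x).2)

theorem stmt_0_general {X : Type*} [Fintype X]
    (D0 D1 : X → ℝ) (hD0 : IsDist D0) (hD1 : IsDist D1)
    (𝓕 : Set (X → ℝ)) (h𝓕 : ∀ f ∈ 𝓕, ∀ x, f x ∈ Set.Icc (0:ℝ) 1)
    (ε γ : ℝ) (hγ : γ ∈ Set.Ioo (0:ℝ) (1/10))
    (DX : X → ℝ) (hDX : DX = fun x => (D0 x + D1 x) / 2)
    (g : X → ℝ)
    (hg : g = fun x => if 0 < D0 x + D1 x then D1 x / (D0 x + D1 x) else 0)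
    (h : X → ℝ) (hh : ∀ x, h x ∈ Set.Icc (0:ℝ) 1)
    (hreg : ∀ f ∈ 𝓕, |expect DX (fun x => f x * (g x - h x))| ≤ ε)
    (hcal : ∀ w : ℝ → ℝ, (∀ t, w t ∈ Set.Icc (0:ℝ) 1) →
      |expect DX (fun x => w (h x) * (g x - h x))| ≤ γ)
    (p : ℝ) (hp : p = expect DX h) :
    0 < p ∧ p < 1 ∧
    ∀ f ∈ 𝓕,
      |expect D1 f - expect (fun z => h z * DX z / p) f| ≤ 2 * ε + 5 * γ ∧
      |expect D0 f - expect (fun z => (1 - h z) * DX z / (1 - p)) f| ≤ 2 * ε + 5 * γ := by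
  obtain ⟨hγ0, hγ1⟩ := hγ
  have hDXdist : IsDist DX := hDX ▸ hD0.avg hD1
  have hD1g : ∀ x, D1 x = 2 * (DX x * g x) := fun x => by
    have := mul_posterior_eq (hD0.1 x) (hD1.1 x)
    rw [hDX, hg]; linarith
  have hD0g : ∀ x, D0 x = 2 * (DX x * (1 - g x)) := fun x => by
    have := mul_posterior_eq (hD0.1 x) (hD1.1 x)
    rw [hDX, hg]; linarith
  have hp_near : |2 * p - 1| ≤ 2 * γ := by
    have hcal1 := hcal (fun _ => 1) fun _ => ⟨zero_le_one, le_rfl⟩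
    simp only [one_mul] at hcal1
    exact hp ▸ abs_two_mul_expect_sub_one_le hD1 hD1g hcal1
  have hp0 : 0 < p := by linarith [(abs_le.1 hp_near).1]
  have hp1 : p < 1 := by linarith [(abs_le.1 hp_near).2]
  have hq : 1 - p = expect DX (fun x => 1 - h x) := by rw [hDXdist.expect_one_sub, hp]
  refine ⟨hp0, hp1, fun f hf => ⟨?_, ?_⟩⟩
  · calc _ ≤ 2 * |expect DX (fun x => f x * (g x - h x))| + |2 * p - 1| := by
          subst hp; exact abs_expect_sub_expect_reweight_le hD1g hDXdist.1 hh (h𝓕 f hf) hp0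
      _ ≤ 2 * ε + 5 * γ := by linarith [hreg f hf]
  · have hh' : ∀ x, 1 - h x ∈ Set.Icc (0:ℝ) 1 := fun x =>
      ⟨sub_nonneg.2 (hh x).2, sub_le_self _ (hh x).1⟩
    calc _ ≤ 2 * |expect DX (fun x => f x * ((1 - g x) - (1 - h x)))| + |2 * (1 - p) - 1| := by
          rw [hq]
          exact abs_expect_sub_expect_reweight_le hD0g hDXdist.1 hh' (h𝓕 f hf) (hq ▸ sub_pos.2 hp1)
      _ = 2 * |expect DX (fun x => f x * (g x - h x))| + |2 * p - 1| := by
          rw [show 2 * (1 - p) - 1 = -(2 * p - 1) by ring, abs_neg]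
          simp only [sub_sub_sub_cancel_left, mul_sub, expect_sub]
          rw [abs_sub_comm]
      _ ≤ 2 * ε + 5 * γ := by linarith [hreg f hf]

theorem stmt_0 {X : Type*} [Fintype X] [Nonempty X]
    (D0 D1 : X → ℝ) (hD0 : IsDist D0) (hD1 : IsDist D1)
    (𝓕 : Set (X → ℝ)) (h𝓕 : ∀ f ∈ 𝓕, ∀ x, f x ∈ Set.Icc (0:ℝ) 1)
    (ε γ : ℝ) (hε : ε ∈ Set.Ioo (0:ℝ) 1) (hγ : γ ∈ Set.Ioo (0:ℝ) (1/10))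
    (DX : X → ℝ) (hDX : DX = fun x => (D0 x + D1 x) / 2)
    (g : X → ℝ)
    (hg : g = fun x => if 0 < D0 x + D1 x then D1 x / (D0 x + D1 x) else 0)
    (h : X → ℝ) (hh : ∀ x, h x ∈ Set.Icc (0:ℝ) 1)
    (hreg : ∀ f ∈ 𝓕, |expect DX (fun x => f x * (g x - h x))| ≤ ε)
    (hcal : ∀ w : ℝ → ℝ, (∀ t, w t ∈ Set.Icc (0:ℝ) 1) →
      |expect DX (fun x => w (h x) * (g x - h x))| ≤ γ)
    (p : ℝ) (hp : p = expect DX h) :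
    0 < p ∧ p < 1 ∧
    ∀ f ∈ 𝓕,
      |expect D1 f - expect (fun z => h z * DX z / p) f| ≤ 2 * ε + 5 * γ ∧
      |expect D0 f - expect (fun z => (1 - h z) * DX z / (1 - p)) f| ≤ 2 * ε + 5 * γ :=
  stmt_0_general D0 D1 hD0 hD1 𝓕 h𝓕 ε γ hγ DX hDX g hg h hh hreg hcal p hp
end

section
/- (Termination of the boosting iteration) Let X be a nonempty finite type, D a distribution on X, g : X → [0,1], ε ∈ (0, 1/2), and ε' ∈ (0, ε²/8]. Let m ∈ ℕ, and suppose there are functions h_0, h_1, …, h_m : X → [0,1] and f_0, …, f_{m−1} : X → [−1,1] such that h_0(x) = 1/2 for all x, E_D[f_i·(g−h_i)] ≥ ε for every i < m, and |h_{i+1}(x) − clamp(h_i(x) + ε·f_i(x))| ≤ ε'/2 for every i < m and every x ∈ X. Then m ≤ 1/(3ε²). -/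
/-- Projection of a real number onto the unit interval. -/
noncomputable def clamp (t : ℝ) : ℝ := min 1 (max 0 t)

lemma clamp_nonneg (t : ℝ) : 0 ≤ clamp t :=
  le_min zero_le_one (le_max_left 0 t)

lemma clamp_le_one (t : ℝ) : clamp t ≤ 1 := min_le_left _ _

lemma clamp_sq_le {g t : ℝ} (hg0 : 0 ≤ g) (hg1 : g ≤ 1) :
    (g - clamp t)^2 ≤ (g - t)^2 := by
  unfold clamp
  rcases le_total t 0 with h0 | h0
  · rw [max_eq_left h0, min_eq_right zero_le_one]
    nlinarith
  · rw [max_eq_right h0]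
    rcases le_total t 1 with h1 | h1
    · rw [min_eq_right h1]
    · rw [min_eq_left h1]; nlinarith

theorem stmt_6 {X : Type*} [Fintype X] [Nonempty X]
    (D : X → ℝ) (hD : IsDist D)
    (g : X → ℝ) (hg : ∀ x, g x ∈ Set.Icc (0:ℝ) 1)
    (ε ε' : ℝ) (hε : ε ∈ Set.Ioo (0:ℝ) (1/2)) (hε' : ε' ∈ Set.Ioc (0:ℝ) (ε ^ 2 / 8))
    (m : ℕ)
    (h : ℕ → X → ℝ) (hh : ∀ i ≤ m, ∀ x, h i x ∈ Set.Icc (0:ℝ) 1)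
    (f : ℕ → X → ℝ) (hf : ∀ i < m, ∀ x, f i x ∈ Set.Icc (-1:ℝ) 1)
    (h0 : ∀ x, h 0 x = 1/2)
    (hcorr : ∀ i < m, ε ≤ expect D (fun x => f i x * (g x - h i x)))
    (hstep : ∀ i < m, ∀ x, |h (i+1) x - clamp (h i x + ε * f i x)| ≤ ε' / 2) :
    (m : ℝ) ≤ 1 / (3 * ε ^ 2) := by
  obtain ⟨hε0, hε12⟩ := hε
  obtain ⟨hε'0, hε'le⟩ := hε'
  obtain ⟨hD0, hD1⟩ := hD
  set Φ : ℕ → ℝ := fun i => expect D (fun x => (g x - h i x)^2) with hΦdef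
  have hΦ0 : Φ 0 ≤ 1/4 := by
    have h1 : Φ 0 ≤ ∑ x, D x * (1/4) := by
      apply Finset.sum_le_sum
      intro x _
      apply mul_le_mul_of_nonneg_left _ (hD0 x)
      show (g x - h 0 x)^2 ≤ 1/4
      rw [h0 x]
      nlinarith [(hg x).1, (hg x).2]
    calc Φ 0 ≤ ∑ x, D x * (1/4) := h1
      _ = (∑ x, D x) * (1/4) := by rw [Finset.sum_mul]
      _ = 1/4 := by rw [hD1]; ring
  have hstep' : ∀ i < m, Φ (i+1) ≤ Φ i - (7/8) * ε^2 := by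
    intro i him
    have hpt : ∀ x, (g x - h (i+1) x)^2 ≤
        (g x - h i x)^2 - 2*ε*(f i x * (g x - h i x)) + ε^2 * (f i x)^2 + ε' := by
      intro x
      have hc0 := clamp_nonneg (h i x + ε * f i x)
      have hc1 := clamp_le_one (h i x + ε * f i x)
      have ha := hh (i+1) (by omega) x
      have hgx := hg x
      have h1 : (g x - clamp (h i x + ε * f i x))^2 ≤ (g x - (h i x + ε * f i x))^2 :=
        clamp_sq_le hgx.1 hgx.2
      have habs := abs_le.mp (hstep i him x)
      have h2 : (g x - h (i+1) x)^2 ≤ (g x - clamp (h i x + ε * f i x))^2 + ε' := by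
        nlinarith [habs.1, habs.2, ha.1, ha.2, hgx.1, hgx.2, hc0, hc1]
      nlinarith [h1, h2]
    have hmono : Φ (i+1) ≤
        expect D (fun x => (g x - h i x)^2 - 2*ε*(f i x * (g x - h i x)) + ε^2 * (f i x)^2 + ε') :=
      Finset.sum_le_sum fun x _ => mul_le_mul_of_nonneg_left (hpt x) (hD0 x)
    have hsplit : expect D (fun x => (g x - h i x)^2 - 2*ε*(f i x * (g x - h i x)) + ε^2 * (f i x)^2 + ε')
        = Φ i - 2*ε * expect D (fun x => f i x * (g x - h i x))
          + ε^2 * expect D (fun x => (f i x)^2) + ε' := by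
      have key : ∀ x : X, D x * ((g x - h i x)^2 - 2*ε*(f i x * (g x - h i x)) + ε^2 * (f i x)^2 + ε')
          = D x * (g x - h i x)^2 - 2*ε*(D x * (f i x * (g x - h i x)))
            + ε^2 * (D x * (f i x)^2) + ε' * D x := fun x => by ring
      simp only [expect, key, Finset.sum_add_distrib, Finset.sum_sub_distrib,
        ← Finset.mul_sum, hD1, mul_one]
      rfl
    have hE2 : expect D (fun x => (f i x)^2) ≤ 1 := by
      have h1 : expect D (fun x => (f i x)^2) ≤ ∑ x, D x := by
        apply Finset.sum_le_sum
        intro x _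
        have := hf i him x
        show D x * (f i x)^2 ≤ D x
        have h1 : (f i x)^2 ≤ 1 := by nlinarith [this.1, this.2]
        calc D x * (f i x)^2 ≤ D x * 1 := mul_le_mul_of_nonneg_left h1 (hD0 x)
          _ = D x := mul_one _
      linarith [hD1 ▸ h1]
    have hE1 := hcorr i him
    rw [hsplit] at hmono
    nlinarith [hmono, hE1, hE2, hε0]
  have hΦnn : 0 ≤ Φ m := by
    apply Finset.sum_nonneg
    intro x _
    exact mul_nonneg (hD0 x) (sq_nonneg _)
  have hind : ∀ k, k ≤ m → Φ k ≤ 1/4 - (k : ℝ) * ((7/8) * ε^2) := by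
    intro k
    induction k with
    | zero => intro _; simpa using hΦ0
    | succ n ih =>
      intro hn
      have h1 := ih (by omega)
      have h2 := hstep' n (by omega)
      push_cast
      linarith
  have hm := hind m le_rfl
  have hε2 : (0:ℝ) < 3 * ε^2 := by positivity
  rw [le_div_iff₀ hε2]
  nlinarith [hm, hΦnn]
end

section
/- (Core of the expanding/shrinking supersimulator construction) Let X be a nonempty finite type, D a distribution on X, g : X → [0,1], m ≥ 1, and let h_0, h_1, …, h_m : X → [0,1] and ε_0, …, ε_{m−1} ≥ 0. Suppose that for every i < m both |E_D[h_i·(g−h_{i+1})]| ≤ ε_i and |E_D[h_{i+1}·(g−h_{i+1})]| ≤ ε_i. Then there exists i < m such that E_D[(h_i − h_{i+1})²] ≤ 1/m + 4·ε_i. -/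
theorem stmt_8 {X : Type*} [Fintype X] [Nonempty X]
    (D : X → ℝ) (hD : IsDist D)
    (g : X → ℝ) (hg : ∀ x, g x ∈ Set.Icc (0:ℝ) 1)
    (m : ℕ) (hm : 1 ≤ m)
    (h : ℕ → X → ℝ) (hh : ∀ i ≤ m, ∀ x, h i x ∈ Set.Icc (0:ℝ) 1)
    (ε : ℕ → ℝ) (hε : ∀ i < m, 0 ≤ ε i)
    (hreg : ∀ i < m, |expect D (fun x => h i x * (g x - h (i+1) x))| ≤ ε i)
    (hcal : ∀ i < m, |expect D (fun x => h (i+1) x * (g x - h (i+1) x))| ≤ ε i) :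
    ∃ i < m, expect D (fun x => (h i x - h (i+1) x) ^ 2) ≤ 1 / m + 4 * ε i := by
  obtain ⟨hD0, hD1⟩ := hD
  by_contra hcon
  push_neg at hcon
  set Φ : ℕ → ℝ := fun i => expect D (fun x => (g x - h i x) ^ 2) with hΦ
  have key : ∀ i < m, expect D (fun x => (h i x - h (i+1) x) ^ 2)
      ≤ Φ i - Φ (i+1) + 4 * ε i := by
    intro i hi
    have e1 := abs_le.mp (hreg i hi)
    have e2 := abs_le.mp (hcal i hi)
    have lin : expect D (fun x => (h i x - h (i+1) x) ^ 2)
        = Φ i - Φ (i+1)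
          - 2 * (expect D (fun x => h (i+1) x * (g x - h (i+1) x))
                 - expect D (fun x => h i x * (g x - h (i+1) x))) := by
      simp only [expect, hΦ, Finset.mul_sum, ← Finset.sum_sub_distrib]
      apply Finset.sum_congr rfl
      intro x _
      ring
    rw [lin]
    linarith
  have hsum1 : ∑ i ∈ Finset.range m, (1 / (m:ℝ) + 4 * ε i)
      < ∑ i ∈ Finset.range m, expect D (fun x => (h i x - h (i+1) x) ^ 2) := by
    apply Finset.sum_lt_sum_of_nonempty
    · simp only [Finset.nonempty_range_iff]; omega
    · intro i hi
      exact hcon i (Finset.mem_range.mp hi)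
  have hsum2 : ∑ i ∈ Finset.range m, expect D (fun x => (h i x - h (i+1) x) ^ 2)
      ≤ Φ 0 - Φ m + ∑ i ∈ Finset.range m, 4 * ε i := by
    calc ∑ i ∈ Finset.range m, expect D (fun x => (h i x - h (i+1) x) ^ 2)
        ≤ ∑ i ∈ Finset.range m, (Φ i - Φ (i+1) + 4 * ε i) := by
          apply Finset.sum_le_sum
          intro i hi
          exact key i (Finset.mem_range.mp hi)
      _ = Φ 0 - Φ m + ∑ i ∈ Finset.range m, 4 * ε i := by
          rw [Finset.sum_add_distrib, Finset.sum_range_sub']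
  have hΦ0 : Φ 0 ≤ 1 := by
    rw [hΦ]
    simp only [expect]
    calc ∑ x, D x * (g x - h 0 x) ^ 2 ≤ ∑ x, D x * 1 := by
          apply Finset.sum_le_sum
          intro x _
          apply mul_le_mul_of_nonneg_left _ (hD0 x)
          obtain ⟨hg0, hg1⟩ := hg x
          obtain ⟨hh0, hh1⟩ := hh 0 (Nat.zero_le m) x
          nlinarith
      _ = 1 := by simp [hD1]
  have hΦm : 0 ≤ Φ m := by
    rw [hΦ]
    apply Finset.sum_nonneg
    intro x _
    exact mul_nonneg (hD0 x) (sq_nonneg _)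
  have hone : ∑ i ∈ Finset.range m, (1 / (m:ℝ) + 4 * ε i)
      = 1 + ∑ i ∈ Finset.range m, 4 * ε i := by
    rw [Finset.sum_add_distrib, Finset.sum_const, Finset.card_range, nsmul_eq_mul]
    have hm' : (m:ℝ) ≠ 0 := Nat.cast_ne_zero.mpr (by omega)
    field_simp
  rw [hone] at hsum1
  linarith
end

section
/- (Regularity transfer under L² closeness) Let X be a nonempty finite type, D a distribution on X, g, h, h' : X → [0,1], ε ≥ 0, β ∈ (0,1], and let 𝓕 be a family of functions X → [−1,1]. Suppose |E_D[f·(g−h')]| ≤ ε for all f ∈ 𝓕, and E_D[(h−h')²] ≤ β. Then for every f ∈ 𝓕, |E_D[f·(g−h)]| ≤ ε + 2·β^{1/3}. -/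
theorem stmt_9 {X : Type*} [Fintype X] [Nonempty X]
    (D : X → ℝ) (hD : IsDist D)
    (g h h' : X → ℝ) (hg : ∀ x, g x ∈ Set.Icc (0:ℝ) 1)
    (hh : ∀ x, h x ∈ Set.Icc (0:ℝ) 1) (hh' : ∀ x, h' x ∈ Set.Icc (0:ℝ) 1)
    (ε β : ℝ) (hε : 0 ≤ ε) (hβ : β ∈ Set.Ioc (0:ℝ) 1)
    (𝓕 : Set (X → ℝ)) (h𝓕 : ∀ f ∈ 𝓕, ∀ x, f x ∈ Set.Icc (-1:ℝ) 1)
    (hreg : ∀ f ∈ 𝓕, |expect D (fun x => f x * (g x - h' x))| ≤ ε)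
    (hclose : expect D (fun x => (h x - h' x) ^ 2) ≤ β) :
    ∀ f ∈ 𝓕, |expect D (fun x => f x * (g x - h x))| ≤ ε + 2 * β ^ ((1:ℝ)/3) := by
  intro f hf
  obtain ⟨hβ0, hβ1⟩ := hβ
  set t := Real.sqrt β with htdef
  have ht : 0 < t := Real.sqrt_pos.2 hβ0
  -- pointwise bound
  have habs : ∀ x, |h' x - h x| ≤ t + (h x - h' x) ^ 2 / t := by
    intro x
    have hsq : (h x - h' x) ^ 2 = |h' x - h x| ^ 2 := by
      rw [← sq_abs, abs_sub_comm]
    rcases le_or_gt (|h' x - h x|) t with h1 | h1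
    · have : 0 ≤ (h x - h' x) ^ 2 / t := by positivity
      linarith
    · have : |h' x - h x| * t ≤ (h x - h' x) ^ 2 := by
        rw [hsq]; nlinarith [abs_nonneg (h' x - h x)]
      rw [ge_iff_le.symm] at this
      have h2 : |h' x - h x| ≤ (h x - h' x) ^ 2 / t := by
        rw [le_div_iff₀ ht]; exact this
      linarith
  have hsplit : expect D (fun x => f x * (g x - h x))
      = expect D (fun x => f x * (g x - h' x)) + expect D (fun x => f x * (h' x - h x)) := by
    unfold expect
    rw [← Finset.sum_add_distrib]
    exact Finset.sum_congr rfl (fun x _ => by ring)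
  have hC : |expect D (fun x => f x * (h' x - h x))| ≤ 2 * t := by
    have h1 : |expect D (fun x => f x * (h' x - h x))|
        ≤ ∑ x, D x * (t + (h x - h' x) ^ 2 / t) := by
      unfold expect
      refine (Finset.abs_sum_le_sum_abs _ _).trans (Finset.sum_le_sum ?_)
      intro x _
      rw [abs_mul, abs_mul, abs_of_nonneg (hD.1 x)]
      have hfx := h𝓕 f hf x
      have hf1 : |f x| ≤ 1 := abs_le.2 ⟨hfx.1, hfx.2⟩
      have h2 := habs x
      have h3 : (0:ℝ) ≤ t + (h x - h' x) ^ 2 / t := by positivity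
      have : |f x| * |h' x - h x| ≤ 1 * (t + (h x - h' x) ^ 2 / t) :=
        mul_le_mul hf1 h2 (abs_nonneg _) zero_le_one
      have := mul_le_mul_of_nonneg_left this (hD.1 x)
      linarith
    have h2 : ∑ x, D x * (t + (h x - h' x) ^ 2 / t)
        = t + (expect D (fun x => (h x - h' x) ^ 2)) / t := by
      unfold expect
      calc ∑ x, D x * (t + (h x - h' x) ^ 2 / t)
          = (∑ x, D x) * t + (∑ x, D x * (h x - h' x) ^ 2) / t := by
            rw [Finset.sum_mul, Finset.sum_div, ← Finset.sum_add_distrib]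
            exact Finset.sum_congr rfl (fun x _ => by ring)
        _ = t + (∑ x, D x * (h x - h' x) ^ 2) / t := by rw [hD.2, one_mul]
    have h3 : (expect D (fun x => (h x - h' x) ^ 2)) / t ≤ β / t := by gcongr
    have h4 : β / t = t := by
      rw [htdef]; exact Real.div_sqrt
    calc |expect D (fun x => f x * (h' x - h x))|
        ≤ t + (expect D (fun x => (h x - h' x) ^ 2)) / t := by rw [← h2]; exact h1
      _ ≤ t + β / t := by linarith
      _ = 2 * t := by rw [h4]; ring
    -- done
  have hBt : t ≤ β ^ ((1:ℝ)/3) := by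
    rw [htdef, Real.sqrt_eq_rpow]
    exact Real.rpow_le_rpow_of_exponent_ge hβ0 hβ1 (by norm_num)
  calc |expect D (fun x => f x * (g x - h x))|
      ≤ |expect D (fun x => f x * (g x - h' x))| + |expect D (fun x => f x * (h' x - h x))| := by
        rw [hsplit]; exact abs_add_le _ _
    _ ≤ ε + 2 * t := add_le_add (hreg f hf) hC
    _ ≤ ε + 2 * β ^ ((1:ℝ)/3) := by linarith
end

section
/- Let X be a nonempty finite type, D_0, D_1 distributions on X, and 𝓕 a family of functions X → [0,1]. Set D_X := (1/2)(D_0 + D_1) and let g be the associated posterior function. If h : X → [0,1] is (𝓕, ε)-regular for g under D_X, then for every f ∈ 𝓕: |E_{D_1}[f] − 2·E_{D_X}[f·h]| ≤ 2ε and |E_{D_0}[f] − 2·E_{D_X}[f·(1−h)]| ≤ 2ε. -/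
/-! Pointwise `D₁ = 2 g D_X` and `D₀ = 2 (1 - g) D_X` (both sides vanish where `D₀ + D₁` does),
so `E_{D₁}[f] - 2 E_{D_X}[f h] = 2 E_{D_X}[f (g - h)]`, and likewise for `D₀` with `1 - g` and
`1 - h` in place of `g` and `h`; regularity bounds the right-hand sides by `2ε`. -/

noncomputable def posterior (a b : ℝ) : ℝ := if 0 < a + b then b / (a + b) else 0

theorem add_mul_posterior {a b : ℝ} (ha : 0 ≤ a) (hb : 0 ≤ b) : (a + b) * posterior a b = b := by
  unfold posterior
  split_ifs
  · field_simp
  · linarith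

theorem add_mul_one_sub_posterior {a b : ℝ} (ha : 0 ≤ a) (hb : 0 ≤ b) :
    (a + b) * (1 - posterior a b) = a := by
  linear_combination -add_mul_posterior ha hb

section Expect

variable {X : Type*} [Fintype X]

theorem expect_neg (D f : X → ℝ) : expect D (fun x => -f x) = -expect D f := by
  simp only [expect, mul_neg, Finset.sum_neg_distrib]

theorem abs_expect_sub_two_mul_expect_le {D D' ρ : X → ℝ} (hD' : ∀ x, D' x = 2 * (D x * ρ x))
    {f h : X → ℝ} {ε : ℝ} (hε : |expect D (fun x => f x * (ρ x - h x))| ≤ ε) :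
    |expect D' f - 2 * expect D (fun x => f x * h x)| ≤ 2 * ε := by
  have hdiff : expect D' f - 2 * expect D (fun x => f x * h x)
      = 2 * expect D (fun x => f x * (ρ x - h x)) := by
    simp only [expect, Finset.mul_sum, ← Finset.sum_sub_distrib, hD']
    exact Finset.sum_congr rfl fun x _ => by ring
  rw [hdiff, abs_mul, abs_two]
  linarith

end Expect

theorem stmt_12_general {X : Type*} [Fintype X]
    (D0 D1 : X → ℝ) (hD0 : IsDist D0) (hD1 : IsDist D1)
    (𝓕 : Set (X → ℝ))
    (DX : X → ℝ) (hDX : DX = fun x => (D0 x + D1 x) / 2)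
    (g : X → ℝ)
    (hg : g = fun x => if 0 < D0 x + D1 x then D1 x / (D0 x + D1 x) else 0)
    (ε : ℝ)
    (h : X → ℝ)
    (hreg : ∀ f ∈ 𝓕, |expect DX (fun x => f x * (g x - h x))| ≤ ε) :
    ∀ f ∈ 𝓕,
      |expect D1 f - 2 * expect DX (fun x => f x * h x)| ≤ 2 * ε ∧
      |expect D0 f - 2 * expect DX (fun x => f x * (1 - h x))| ≤ 2 * ε := by
  intro f hf
  have hgx : ∀ x, g x = posterior (D0 x) (D1 x) := fun x => by rw [hg]; rfl
  have hD1X : ∀ x, D1 x = 2 * (DX x * g x) := fun x => by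
    rw [hDX, hgx]; linear_combination -add_mul_posterior (hD0.1 x) (hD1.1 x)
  have hD0X : ∀ x, D0 x = 2 * (DX x * (1 - g x)) := fun x => by
    rw [hDX, hgx]; linear_combination -add_mul_one_sub_posterior (hD0.1 x) (hD1.1 x)
  refine ⟨abs_expect_sub_two_mul_expect_le hD1X (hreg f hf),
    abs_expect_sub_two_mul_expect_le hD0X ?_⟩
  have hflip : (fun x => f x * ((1 - g x) - (1 - h x))) = fun x => -(f x * (g x - h x)) := by
    funext x; ring
  rw [hflip, expect_neg, abs_neg]
  exact hreg f hf

theorem stmt_12 {X : Type*} [Fintype X] [Nonempty X]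
    (D0 D1 : X → ℝ) (hD0 : IsDist D0) (hD1 : IsDist D1)
    (𝓕 : Set (X → ℝ)) (h𝓕 : ∀ f ∈ 𝓕, ∀ x, f x ∈ Set.Icc (0:ℝ) 1)
    (DX : X → ℝ) (hDX : DX = fun x => (D0 x + D1 x) / 2)
    (g : X → ℝ)
    (hg : g = fun x => if 0 < D0 x + D1 x then D1 x / (D0 x + D1 x) else 0)
    (ε : ℝ)
    (h : X → ℝ) (hh : ∀ x, h x ∈ Set.Icc (0:ℝ) 1)
    (hreg : ∀ f ∈ 𝓕, |expect DX (fun x => f x * (g x - h x))| ≤ ε) :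
    ∀ f ∈ 𝓕,
      |expect D1 f - 2 * expect DX (fun x => f x * h x)| ≤ 2 * ε ∧
      |expect D0 f - 2 * expect DX (fun x => f x * (1 - h x))| ≤ 2 * ε :=
  stmt_12_general D0 D1 hD0 hD1 𝓕 DX hDX g hg ε h hreg
end

section
/- Let X be a nonempty finite type, D_0, D_1 distributions on X, ε ∈ (0,1), and 𝓕 a family of functions X → [0,1]. Set D_X := (1−ε)·D_0 + ε·D_1 and let g be the associated tilted posterior function. If h : X → [0,1] is (𝓕, ε²)-regular for g under D_X, then for every f ∈ 𝓕: |E_{D_1}[f] − (1/ε)·E_{D_X}[f·h]| ≤ ε. -/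
/-
A weighted posterior `x ↦ ε D₁(x) / D_X(x)` satisfies `D_X · g = ε D₁` pointwise, so
`E_{D_X}[f g] = ε E_{D₁}[f]`. Regularity then says `|ε E_{D₁}[f] − E_{D_X}[f h]| ≤ ε²`, and
dividing by `ε` gives the claim.
-/

lemma mul_ite_div_self {a b : ℝ} (ha : 0 ≤ a) (hb : a = 0 → b = 0) :
    a * (if 0 < a then b / a else 0) = b := by
  rcases ha.lt_or_eq with ha | ha
  · rw [if_pos ha, mul_div_cancel₀ b ha.ne']
  · rw [← ha, hb ha.symm, zero_mul]

lemma mixture_nonneg {p q ε : ℝ} (hp : 0 ≤ p) (hq : 0 ≤ q) (hε : ε ∈ Set.Icc (0:ℝ) 1) :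
    0 ≤ (1 - ε) * p + ε * q :=
  add_nonneg (mul_nonneg (sub_nonneg.2 hε.2) hp) (mul_nonneg hε.1 hq)

lemma mixture_mul_posterior {p q ε : ℝ} (hp : 0 ≤ p) (hq : 0 ≤ q) (hε : ε ∈ Set.Icc (0:ℝ) 1) :
    ((1 - ε) * p + ε * q) * (if 0 < (1 - ε) * p + ε * q then ε * q / ((1 - ε) * p + ε * q) else 0)
      = ε * q := by
  refine mul_ite_div_self (mixture_nonneg hp hq hε) fun h0 => ?_
  have := mul_nonneg (sub_nonneg.2 hε.2) hp
  linarith [mul_nonneg hε.1 hq]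

section expect

variable {X : Type*} [Fintype X]

lemma expect_mul_sub (D f g h : X → ℝ) :
    expect D (fun x => f x * (g x - h x))
      = expect D (fun x => f x * g x) - expect D (fun x => f x * h x) := by
  simp only [expect, ← Finset.sum_sub_distrib]
  exact Finset.sum_congr rfl fun x _ => by ring

lemma expect_mul_posterior {D0 D1 : X → ℝ} (hD0 : ∀ x, 0 ≤ D0 x) (hD1 : ∀ x, 0 ≤ D1 x)
    {ε : ℝ} (hε : ε ∈ Set.Icc (0:ℝ) 1) (f : X → ℝ) :
    expect (fun x => (1 - ε) * D0 x + ε * D1 x)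
        (fun x => f x * if 0 < (1 - ε) * D0 x + ε * D1 x
          then ε * D1 x / ((1 - ε) * D0 x + ε * D1 x) else 0)
      = ε * expect D1 f := by
  simp only [expect, Finset.mul_sum]
  refine Finset.sum_congr rfl fun x _ => ?_
  rw [mul_left_comm, mixture_mul_posterior (hD0 x) (hD1 x) hε]
  ring

end expect

lemma abs_sub_one_div_mul_le_of_abs_mul_sub_le {a b ε : ℝ} (hε : 0 < ε) (h : |ε * a - b| ≤ ε ^ 2) :
    |a - 1 / ε * b| ≤ ε := by
  have hrw : a - 1 / ε * b = 1 / ε * (ε * a - b) := by field_simp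
  rw [hrw, abs_mul, abs_of_pos (one_div_pos.2 hε)]
  calc 1 / ε * |ε * a - b| ≤ 1 / ε * ε ^ 2 := by gcongr
    _ = ε := by field_simp

theorem stmt_13_general {X : Type*} [Fintype X]
    (D0 D1 : X → ℝ) (hD0 : IsDist D0) (hD1 : IsDist D1)
    (ε : ℝ) (hε : ε ∈ Set.Ioo (0:ℝ) 1)
    (𝓕 : Set (X → ℝ))
    (DX : X → ℝ) (hDX : DX = fun x => (1 - ε) * D0 x + ε * D1 x)
    (g : X → ℝ)
    (hg : g = fun x => if 0 < DX x then ε * D1 x / DX x else 0)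
    (h : X → ℝ)
    (hreg : ∀ f ∈ 𝓕, |expect DX (fun x => f x * (g x - h x))| ≤ ε ^ 2) :
    ∀ f ∈ 𝓕, |expect D1 f - (1/ε) * expect DX (fun x => f x * h x)| ≤ ε := by
  intro f hf
  subst hg hDX
  have hreg_f := hreg f hf
  rw [expect_mul_sub, expect_mul_posterior hD0.1 hD1.1 (Set.Ioo_subset_Icc_self hε)] at hreg_f
  exact abs_sub_one_div_mul_le_of_abs_mul_sub_le hε.1 hreg_f

theorem stmt_13 {X : Type*} [Fintype X] [Nonempty X]
    (D0 D1 : X → ℝ) (hD0 : IsDist D0) (hD1 : IsDist D1)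
    (ε : ℝ) (hε : ε ∈ Set.Ioo (0:ℝ) 1)
    (𝓕 : Set (X → ℝ)) (h𝓕 : ∀ f ∈ 𝓕, ∀ x, f x ∈ Set.Icc (0:ℝ) 1)
    (DX : X → ℝ) (hDX : DX = fun x => (1 - ε) * D0 x + ε * D1 x)
    (g : X → ℝ)
    (hg : g = fun x => if 0 < DX x then ε * D1 x / DX x else 0)
    (h : X → ℝ) (hh : ∀ x, h x ∈ Set.Icc (0:ℝ) 1)
    (hreg : ∀ f ∈ 𝓕, |expect DX (fun x => f x * (g x - h x))| ≤ ε ^ 2) :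
    ∀ f ∈ 𝓕, |expect D1 f - (1/ε) * expect DX (fun x => f x * h x)| ≤ ε :=
  stmt_13_general D0 D1 hD0 hD1 ε hε 𝓕 DX hDX g hg h hreg
end

section
/- Let X be a nonempty finite type, D_0, D_1 distributions on X, and ε ∈ (0,1). Set D_X := (1−ε)·D_0 + ε·D_1 and let g be the associated tilted posterior function. If h : X → [0,1] is γ-calibrated for g under D_X, then for every function w : ℝ → [0,1]: |E_{D_1}[w∘h] − (1/ε)·E_{D_X}[h·(w∘h)]| ≤ γ/ε. -/
/-! The tilted posterior satisfies `D_X · g = ε · D_1` pointwise, so `ε · E_{D_1}[u]` equals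
`E_{D_X}[u · g]`; subtracting `E_{D_X}[h · (w ∘ h)]` leaves exactly the calibration error of `h`,
scaled by `1/ε`. -/

lemma add_mul_ite_div_add_self {p q : ℝ} (hp : 0 ≤ p) (hq : 0 ≤ q) :
    (p + q) * (if 0 < p + q then q / (p + q) else 0) = q := by
  split_ifs with hpos
  · exact mul_div_cancel₀ q hpos.ne'
  · have hq0 : q = 0 := by linarith
    simp [hq0]

lemma expect_sub_inv_mul_expect {X : Type*} [Fintype X] {D D' g : X → ℝ} {ε : ℝ}
    (hε : ε ≠ 0) (hD'g : ∀ x, D' x * g x = ε * D x) (u v : X → ℝ) :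
    expect D u - ε⁻¹ * expect D' (fun x => v x * u x) =
      ε⁻¹ * expect D' (fun x => u x * (g x - v x)) := by
  have hD : ∀ x, D x = ε⁻¹ * (D' x * g x) := fun x => by
    rw [hD'g, inv_mul_cancel_left₀ hε]
  simp only [expect, hD, Finset.mul_sum, ← Finset.sum_sub_distrib]
  exact Finset.sum_congr rfl fun x _ => by ring

theorem stmt_14_general {X : Type*} [Fintype X]
    (D0 D1 : X → ℝ) (hD0 : IsDist D0) (hD1 : IsDist D1)
    (ε : ℝ) (hε : ε ∈ Set.Ioo (0:ℝ) 1)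
    (DX : X → ℝ) (hDX : DX = fun x => (1 - ε) * D0 x + ε * D1 x)
    (g : X → ℝ)
    (hg : g = fun x => if 0 < DX x then ε * D1 x / DX x else 0)
    (γ : ℝ)
    (h : X → ℝ)
    (hcal : ∀ w : ℝ → ℝ, (∀ t, w t ∈ Set.Icc (0:ℝ) 1) →
      |expect DX (fun x => w (h x) * (g x - h x))| ≤ γ) :
    ∀ w : ℝ → ℝ, (∀ t, w t ∈ Set.Icc (0:ℝ) 1) →
      |expect D1 (fun x => w (h x)) - (1/ε) * expect DX (fun x => h x * w (h x))| ≤ γ / ε := by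
  intro w hw
  obtain ⟨hε0, hε1⟩ := hε
  have hDXg : ∀ x, DX x * g x = ε * D1 x := fun x => by
    subst hDX hg
    exact add_mul_ite_div_add_self (mul_nonneg (by linarith) (hD0.1 x))
      (mul_nonneg hε0.le (hD1.1 x))
  rw [one_div, expect_sub_inv_mul_expect hε0.ne' hDXg, abs_mul, abs_inv, abs_of_pos hε0,
    inv_mul_eq_div]
  exact div_le_div_of_nonneg_right (hcal w hw) hε0.le

theorem stmt_14 {X : Type*} [Fintype X] [Nonempty X]
    (D0 D1 : X → ℝ) (hD0 : IsDist D0) (hD1 : IsDist D1)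
    (ε : ℝ) (hε : ε ∈ Set.Ioo (0:ℝ) 1)
    (DX : X → ℝ) (hDX : DX = fun x => (1 - ε) * D0 x + ε * D1 x)
    (g : X → ℝ)
    (hg : g = fun x => if 0 < DX x then ε * D1 x / DX x else 0)
    (γ : ℝ)
    (h : X → ℝ) (hh : ∀ x, h x ∈ Set.Icc (0:ℝ) 1)
    (hcal : ∀ w : ℝ → ℝ, (∀ t, w t ∈ Set.Icc (0:ℝ) 1) →
      |expect DX (fun x => w (h x) * (g x - h x))| ≤ γ) :
    ∀ w : ℝ → ℝ, (∀ t, w t ∈ Set.Icc (0:ℝ) 1) →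
      |expect D1 (fun x => w (h x)) - (1/ε) * expect DX (fun x => h x * w (h x))| ≤ γ / ε :=
  stmt_14_general D0 D1 hD0 hD1 ε hε DX hDX g hg γ h hcal
end

section
/- (Abstract complexity-theoretic regularity lemma, constructive form) Let X be a nonempty finite type, D a distribution on X, g : X → [0,1], ε ∈ (0,1), and let 𝓕 be a family of functions X → [0,1]. Then there exist a natural number k ≤ 1/(4ε²) + 1, signs σ_1, …, σ_k ∈ {−1, +1}, and functions f_1, …, f_k ∈ 𝓕 such that the function h := h_k defined recursively by h_0(x) = 1/2 and h_j(x) = clamp(h_{j−1}(x) + ε·σ_j·f_j(x)) for 1 ≤ j ≤ k is (𝓕, ε)-regular for g under D. -/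
lemma clamp_sq (a t : ℝ) (h0 : 0 ≤ a) (h1 : a ≤ 1) : (a - clamp t)^2 ≤ (a - t)^2 := by
  unfold clamp
  rcases le_total t 0 with h | h
  · rw [max_eq_left h, min_eq_right zero_le_one]
    nlinarith
  · rw [max_eq_right h]
    rcases le_total t 1 with h' | h'
    · rw [min_eq_right h']
    · rw [min_eq_left h']
      nlinarith

lemma expect_expand {X : Type*} [Fintype X] (D g h f : X → ℝ) (c : ℝ) :
    expect D (fun x => (g x - (h x + c * f x))^2)
      = expect D (fun x => (g x - h x)^2)
        - 2*c* expect D (fun x => f x * (g x - h x))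
        + c^2 * expect D (fun x => (f x)^2) := by
  simp only [expect, Finset.mul_sum, ← Finset.sum_sub_distrib, ← Finset.sum_add_distrib]
  exact Finset.sum_congr rfl fun x _ => by ring

theorem stmt_15 {X : Type*} [Fintype X] [Nonempty X]
    (D : X → ℝ) (hD : IsDist D)
    (g : X → ℝ) (hg : ∀ x, g x ∈ Set.Icc (0:ℝ) 1)
    (ε : ℝ) (hε : ε ∈ Set.Ioo (0:ℝ) 1)
    (𝓕 : Set (X → ℝ)) (h𝓕 : ∀ f ∈ 𝓕, ∀ x, f x ∈ Set.Icc (0:ℝ) 1) :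
    ∃ (k : ℕ) (σ : ℕ → ℝ) (f : ℕ → X → ℝ) (h : ℕ → X → ℝ),
      (k : ℝ) ≤ 1 / (4 * ε ^ 2) + 1 ∧
      (∀ j, 1 ≤ j → j ≤ k → (σ j = 1 ∨ σ j = -1) ∧ f j ∈ 𝓕) ∧
      (∀ x, h 0 x = 1/2) ∧
      (∀ j, 1 ≤ j → j ≤ k → ∀ x, h j x = clamp (h (j-1) x + ε * σ j * f j x)) ∧
      (∀ f' ∈ 𝓕, |expect D (fun x => f' x * (g x - h k x))| ≤ ε) := by
  obtain ⟨hε0, hε1⟩ := hε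
  have hε2 : 0 < ε ^ 2 := by positivity
  set Φ : (X → ℝ) → ℝ := fun h => expect D (fun x => (g x - h x)^2) with hΦ
  set Reg : (X → ℝ) → Prop :=
    fun h => ∀ f' ∈ 𝓕, |expect D (fun x => f' x * (g x - h x))| ≤ ε with hReg
  have hΦ0 : ∀ h : X → ℝ, 0 ≤ Φ h := by
    intro h
    apply Finset.sum_nonneg
    intro x _
    exact mul_nonneg (hD.1 x) (sq_nonneg _)
  -- key induction
  have key : ∀ n : ℕ,
      (∃ k ≤ n, ∃ (σ : ℕ → ℝ) (f h : ℕ → X → ℝ),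
        (∀ j, 1 ≤ j → j ≤ k → (σ j = 1 ∨ σ j = -1) ∧ f j ∈ 𝓕) ∧
        (∀ x, h 0 x = 1/2) ∧
        (∀ j, 1 ≤ j → j ≤ k → ∀ x, h j x = clamp (h (j-1) x + ε * σ j * f j x)) ∧
        Reg (h k)) ∨
      (∃ (σ : ℕ → ℝ) (f h : ℕ → X → ℝ),
        (∀ j, 1 ≤ j → j ≤ n → (σ j = 1 ∨ σ j = -1) ∧ f j ∈ 𝓕) ∧
        (∀ x, h 0 x = 1/2) ∧
        (∀ j, 1 ≤ j → j ≤ n → ∀ x, h j x = clamp (h (j-1) x + ε * σ j * f j x)) ∧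
        Φ (h n) ≤ 1/4 - n * ε^2) := by
    intro n
    induction n with
    | zero =>
        right
        refine ⟨fun _ => 1, fun _ _ => 0, fun _ _ => 1/2, ?_, fun _ => rfl, ?_, ?_⟩
        · intro j h1 h0; omega
        · intro j h1 h0; omega
        · simp only [Nat.cast_zero, zero_mul, sub_zero, hΦ]
          calc expect D (fun x => (g x - 1/2)^2)
              ≤ ∑ x, D x * (1/4) := by
                apply Finset.sum_le_sum
                intro x _
                have := hg x
                apply mul_le_mul_of_nonneg_left _ (hD.1 x)
                nlinarith [this.1, this.2]
            _ = 1/4 := by rw [← Finset.sum_mul, hD.2, one_mul]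
    | succ n ih =>
        rcases ih with ⟨k, hk, rest⟩ | ⟨σ, f, h, hσf, h0, hrec, hΦn⟩
        · exact Or.inl ⟨k, le_trans hk (Nat.le_succ n), rest⟩
        by_cases hr : Reg (h n)
        · exact Or.inl ⟨n, Nat.le_succ n, σ, f, h, hσf, h0, hrec, hr⟩
        right
        -- extract a violating f'
        simp only [hReg, not_forall] at hr
        obtain ⟨fn, hfn, hEbig⟩ := hr
        push_neg at hEbig
        set E := expect D (fun x => fn x * (g x - h n x)) with hE
        set s : ℝ := if 0 ≤ E then 1 else -1 with hs
        have hsE : s * E = |E| := by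
          rw [hs]; split_ifs with hc
          · rw [one_mul, abs_of_nonneg hc]
          · rw [abs_of_neg (lt_of_not_ge hc)]; ring
        have hs2 : s^2 = 1 := by rw [hs]; split_ifs <;> norm_num
        refine ⟨Function.update σ (n+1) s, Function.update f (n+1) fn,
          fun j => if j = n+1 then (fun x => clamp (h n x + ε * s * fn x)) else h j,
          ?_, ?_, ?_, ?_⟩
        · intro j h1 hj
          rcases Nat.lt_or_ge j (n+1) with hlt | hge
          · rw [Function.update_of_ne (by omega), Function.update_of_ne (by omega)]
            exact hσf j h1 (by omega)
          · have : j = n+1 := by omega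
            subst this
            rw [Function.update_self, Function.update_self]
            refine ⟨?_, hfn⟩
            rw [hs]; split_ifs with hc
            · left; rfl
            · right; rfl
        · intro x; simp only [if_neg (Nat.succ_ne_zero n).symm]
          · simpa using h0 x
        · intro j h1 hj x
          rcases Nat.lt_or_ge j (n+1) with hlt | hge
          · have hne : j ≠ n + 1 := by omega
            have hne' : j - 1 ≠ n + 1 := by omega
            simp only [if_neg hne, if_neg hne', Function.update_of_ne hne]
            exact hrec j h1 (by omega) x
          · have : j = n+1 := by omega
            subst this
            have hne : n + 1 - 1 ≠ n + 1 := by omega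
            simp only [if_pos rfl, if_neg hne, Function.update_self]
            simp
        · simp only [if_pos rfl]
          have step1 : Φ (fun x => clamp (h n x + ε * s * fn x))
              ≤ expect D (fun x => (g x - (h n x + (ε * s) * fn x))^2) := by
            apply Finset.sum_le_sum
            intro x _
            apply mul_le_mul_of_nonneg_left _ (hD.1 x)
            have hgx := hg x
            have := clamp_sq (g x) (h n x + ε * s * fn x) hgx.1 hgx.2
            calc (g x - clamp (h n x + ε * s * fn x))^2
                ≤ (g x - (h n x + ε * s * fn x))^2 := this
              _ = (g x - (h n x + (ε * s) * fn x))^2 := by ring_nf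
          have step2 := expect_expand D g (h n) fn (ε * s)
          have hf2 : expect D (fun x => (fn x)^2) ≤ 1 := by
            calc expect D (fun x => (fn x)^2) ≤ ∑ x, D x := by
                  apply Finset.sum_le_sum
                  intro x _
                  show D x * fn x ^ 2 ≤ D x
                  have hx := h𝓕 fn hfn x
                  have h2 : fn x ^ 2 ≤ 1 := by nlinarith [hx.1, hx.2]
                  exact mul_le_of_le_one_right (hD.1 x) h2
              _ = 1 := hD.2
          have hεE : ε < |E| := hEbig
          have key2 : Φ (fun x => clamp (h n x + ε * s * fn x)) ≤ Φ (h n) - ε^2 := by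
            have hEc : (ε*s)^2 = ε^2 := by rw [mul_pow, hs2, mul_one]
            calc Φ (fun x => clamp (h n x + ε * s * fn x))
                ≤ Φ (h n) - 2*(ε*s)* E + (ε*s)^2 * expect D (fun x => (fn x)^2) := by
                  rw [← step2]; exact step1
              _ = Φ (h n) - 2*ε*(s*E) + ε^2 * expect D (fun x => (fn x)^2) := by
                  rw [hEc]; ring
              _ ≤ Φ (h n) - 2*ε*(s*E) + ε^2 * 1 := by
                  have := mul_le_mul_of_nonneg_left hf2 (le_of_lt hε2)
                  linarith
              _ ≤ Φ (h n) - 2*ε*ε + ε^2 := by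
                  rw [hsE]
                  have : ε * ε ≤ ε * |E| := mul_le_mul_of_nonneg_left (le_of_lt hεE) (le_of_lt hε0)
                  linarith
              _ = Φ (h n) - ε^2 := by ring
          calc Φ (fun x => clamp (h n x + ε * s * fn x)) ≤ Φ (h n) - ε^2 := key2
            _ ≤ 1/4 - n * ε^2 - ε^2 := by linarith
            _ = 1/4 - (↑(n+1)) * ε^2 := by push_cast; ring
  -- apply at N
  set N : ℕ := ⌊1 / (4 * ε^2)⌋₊ + 1 with hN
  have hNle : (N : ℝ) ≤ 1 / (4 * ε^2) + 1 := by
    rw [hN]; push_cast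
    have : (⌊1 / (4 * ε^2)⌋₊ : ℝ) ≤ 1 / (4 * ε^2) := Nat.floor_le (by positivity)
    linarith
  have hNgt : 1 / (4 * ε^2) < (N : ℝ) := by
    rw [hN]; push_cast
    exact Nat.lt_floor_add_one _
  rcases key N with ⟨k, hkN, σ, f, h, c1, c2, c3, c4⟩ | ⟨σ, f, h, _, _, _, hΦN⟩
  · refine ⟨k, σ, f, h, ?_, c1, c2, c3, c4⟩
    calc (k : ℝ) ≤ (N : ℝ) := by exact_mod_cast hkN
      _ ≤ 1 / (4 * ε^2) + 1 := hNle
  · exfalso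
    have h1 : 1/4 < (N : ℝ) * ε^2 := by
      have := mul_lt_mul_of_pos_right hNgt (by positivity : (0:ℝ) < 4 * ε^2)
      rw [div_mul_cancel₀] at this
      · nlinarith
      · positivity
    have := hΦ0 (h N)
    linarith
end
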